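/- Let C > 0 and define ψ : (−log C, ∞) → ℝ by ψ(t) = ∫_{e^{−t/3}}^{C^{1/3}} (C − r³)^(1/3) dr. Then ψ is smooth with ψ′(t) = (1/3)·e^(−t/3)·(C − e^(−t))^(1/3) > 0, and for every t > −log C there hold ψ′(t) + 3·ψ″(t) = (C·e^t − 1)^(−1)·ψ′(t) and 27·ψ′(t)²·( ψ′(t) + 3·ψ″(t) )·e^(2t) = 1. -/

import Mathlib

open Real
open scoped NNReal ENNReal

/-- The potential `ψ(t) = ∫_{e^{−t/3}}^{C^{1/3}} (C − r³)^{1/3} dr`. -/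
noncomputable def psiPot (C : ℝ) (t : ℝ) : ℝ :=
  ∫ r in Real.exp (-t / 3)..(C ^ ((1 : ℝ) / 3)), (C - r ^ 3) ^ ((1 : ℝ) / 3)

/-- The first derivative of `psiPot`. -/
noncomputable def gFun (C : ℝ) (t : ℝ) : ℝ :=
  (1 / 3) * Real.exp (-t / 3) * (C - Real.exp (-t)) ^ ((1 : ℝ) / 3)

lemma contFun (C : ℝ) : Continuous (fun r : ℝ => (C - r ^ 3) ^ ((1 : ℝ) / 3)) := by
  apply Continuous.rpow_const (by continuity)
  intro x; right; norm_num

lemma upos {C t : ℝ} (hC : 0 < C) (ht : -Real.log C < t) : 0 < C - Real.exp (-t) := by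
  have : Real.exp (-t) < Real.exp (Real.log C) := Real.exp_lt_exp.2 (by linarith)
  rw [Real.exp_log hC] at this; linarith

lemma psiPot_hasDerivAt {C : ℝ} (hC : 0 < C) {t : ℝ} (ht : -Real.log C < t) :
    HasDerivAt (psiPot C) (gFun C t) t := by
  have h1 : HasDerivAt (fun u : ℝ => Real.exp (-u / 3))
      (Real.exp (-t / 3) * (-1 / 3)) t := by
    have : HasDerivAt (fun u : ℝ => -u / 3) (-1 / 3) t := by
      simpa using ((hasDerivAt_id t).neg.div_const 3)
    simpa [Function.comp_def] using (Real.hasDerivAt_exp (-t / 3)).comp t this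
  have h2 : HasDerivAt (fun x : ℝ => ∫ r in x..(C ^ ((1 : ℝ) / 3)), (C - r ^ 3) ^ ((1 : ℝ) / 3))
      (-((C - (Real.exp (-t / 3)) ^ 3) ^ ((1 : ℝ) / 3))) (Real.exp (-t / 3)) :=
    intervalIntegral.integral_hasDerivAt_left
      ((contFun C).intervalIntegrable _ _)
      ((contFun C).stronglyMeasurableAtFilter _ _)
      (contFun C).continuousAt
  have h3 := h2.comp t h1
  have he : (Real.exp (-t / 3)) ^ 3 = Real.exp (-t) := by
    rw [← Real.exp_nat_mul]
    norm_num
    ring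
  have h4 : HasDerivAt (psiPot C)
      (-((C - (Real.exp (-t / 3)) ^ 3) ^ ((1 : ℝ) / 3)) * (Real.exp (-t / 3) * (-1 / 3))) t := h3
  rw [he] at h4
  convert h4 using 1
  unfold gFun; ring

lemma gFun_hasDerivAt {C : ℝ} (hC : 0 < C) {t : ℝ} (ht : -Real.log C < t) :
    HasDerivAt (gFun C)
      ((1 / 3) * (Real.exp (-t / 3) * (-1 / 3)) * (C - Real.exp (-t)) ^ ((1 : ℝ) / 3)
        + (1 / 3) * Real.exp (-t / 3)
          * ((1 / 3) * (C - Real.exp (-t)) ^ ((1 : ℝ) / 3 - 1) * Real.exp (-t))) t := by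
  have hu := upos hC ht
  have h1 : HasDerivAt (fun u : ℝ => (1 / 3 : ℝ) * Real.exp (-u / 3))
      ((1 / 3) * (Real.exp (-t / 3) * (-1 / 3))) t := by
    have : HasDerivAt (fun u : ℝ => -u / 3) (-1 / 3) t := by
      simpa using ((hasDerivAt_id t).neg.div_const 3)
    exact (((Real.hasDerivAt_exp (-t / 3)).comp t this)).const_mul _
  have h2 : HasDerivAt (fun u : ℝ => C - Real.exp (-u)) (Real.exp (-t)) t := by
    have h : HasDerivAt (fun u : ℝ => Real.exp (-u)) (-Real.exp (-t)) t := by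
      simpa [Function.comp_def] using (Real.hasDerivAt_exp (-t)).comp t ((hasDerivAt_id t).neg)
    simpa using (h.const_sub C)
  have h3 : HasDerivAt (fun u : ℝ => (C - Real.exp (-u)) ^ ((1 : ℝ) / 3))
      ((1 / 3) * (C - Real.exp (-t)) ^ ((1 : ℝ) / 3 - 1) * Real.exp (-t)) t := by
    have h4 := (Real.hasDerivAt_rpow_const (p := (1 : ℝ) / 3) (Or.inl hu.ne')).comp t h2
    simpa [mul_assoc, Function.comp_def] using h4
  exact h1.mul h3

lemma deriv_psiPot {C : ℝ} (hC : 0 < C) {t : ℝ} (ht : -Real.log C < t) :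
    deriv (psiPot C) t = gFun C t := (psiPot_hasDerivAt hC ht).deriv

lemma deriv2_psiPot {C : ℝ} (hC : 0 < C) {t : ℝ} (ht : -Real.log C < t) :
    deriv (deriv (psiPot C)) t = deriv (gFun C) t := by
  apply Filter.EventuallyEq.deriv_eq
  filter_upwards [Ioi_mem_nhds ht] with s hs
  exact deriv_psiPot hC hs

/-- An antiderivative (in a neighborhood) of a real-analytic function is real-analytic. -/
lemma analyticAt_of_hasDerivAt {f g : ℝ → ℝ} {x₀ : ℝ} (hg : AnalyticAt ℝ g x₀)
    (hf : ∀ᶠ x in nhds x₀, HasDerivAt f (g x) x) : AnalyticAt ℝ f x₀ := by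
  obtain ⟨p, r, hp⟩ := hg
  obtain ⟨ε, hε, hfε⟩ := Metric.eventually_nhds_iff.1 hf
  obtain ⟨r', hr'0, hr'lt⟩ : ∃ r' : ℝ≥0, (0 : ℝ≥0∞) < r' ∧ (r' : ℝ≥0∞) < min r (ENNReal.ofReal ε) := by
    have hpos : (0 : ℝ≥0∞) < min r (ENNReal.ofReal ε) :=
      lt_min hp.r_pos (ENNReal.ofReal_pos.2 hε)
    exact ENNReal.lt_iff_exists_nnreal_btwn.1 hpos
  have hr'r : (r' : ℝ≥0∞) < r := hr'lt.trans_le (min_le_left _ _)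
  have hr'pos : 0 < (r' : ℝ) := by exact_mod_cast hr'0
  have hr'ε : (r' : ℝ) < ε := by
    have h1 : (r' : ℝ≥0∞) < ENNReal.ofReal ε := hr'lt.trans_le (min_le_right _ _)
    have := ENNReal.coe_lt_coe.1 (by simpa [ENNReal.ofReal] using h1)
    calc (r' : ℝ) < (ε.toNNReal : ℝ) := by exact_mod_cast this
      _ = ε := Real.coe_toNNReal _ hε.le
  set a : ℕ → ℝ := fun n => p.coeff n with ha
  set b : ℕ → ℝ := fun n => match n with
    | 0 => f x₀
    | (m + 1) => a m / (m + 1) with hb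
  -- summable bound
  set u : ℕ → ℝ := fun n => |a n| * (r' : ℝ) ^ n with hudef
  have hu : Summable u := by
    have := p.summable_norm_mul_pow (hr'r.trans_le hp.r_le)
    apply this.congr
    intro n
    rw [hudef]
    simp [ha, FormalMultilinearSeries.norm_apply_eq_norm_coef, Real.norm_eq_abs]
  -- the sum of the derivative-series equals g
  have hsum_a : ∀ y : ℝ, |y| < (r' : ℝ) → HasSum (fun n => a n * y ^ n) (g (x₀ + y)) := by
    intro y hy
    have hmem : y ∈ Metric.eball (0 : ℝ) r := by
      have : y ∈ Metric.eball (0 : ℝ) (r' : ℝ≥0∞) := by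
        rw [Metric.emetric_ball_nnreal]
        simpa [Metric.mem_ball, Real.dist_eq] using hy
      exact Metric.eball_subset_eball hr'r.le this
    have hps := hp.hasSum hmem
    have heq : (fun n => p n fun _ => y) = fun n => a n * y ^ n := by
      funext n
      rw [FormalMultilinearSeries.apply_eq_pow_smul_coeff]
      simp [ha, smul_eq_mul, mul_comm]
    rwa [heq] at hps
  -- the candidate primitive series, minus its constant term
  set F : ℝ → ℝ := fun z => ∑' n, b (n + 1) * z ^ (n + 1) with hF
  set t : Set ℝ := Metric.ball (0 : ℝ) (r' : ℝ) with htdef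
  have htopen : IsOpen t := Metric.isOpen_ball
  have hmem_abs : ∀ y ∈ t, |y| < (r' : ℝ) := by
    intro y hy
    simpa [htdef, Metric.mem_ball, Real.dist_eq] using hy
  have hDF : ∀ y ∈ t, HasDerivAt F (g (x₀ + y)) y := by
    intro y hy
    have key : HasDerivAt F (∑' n, a n * y ^ n) y := by
      apply hasDerivAt_tsum_of_isPreconnected hu htopen
        (convex_ball (0 : ℝ) (r' : ℝ)).isPreconnected
        (g := fun n z => b (n + 1) * z ^ (n + 1)) (g' := fun n z => a n * z ^ n)
        (y₀ := 0)
      · intro n z hz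
        have h0 := (hasDerivAt_pow (n + 1) z).const_mul (b (n + 1))
        have hbn : b (n + 1) * (((n : ℝ) + 1) * z ^ (n + 1 - 1)) = a n * z ^ n := by
          have hn1 : ((n : ℝ) + 1) ≠ 0 := by positivity
          simp only [hb, Nat.add_sub_cancel]
          field_simp
        have h0' : HasDerivAt (fun z : ℝ => b (n + 1) * z ^ (n + 1))
            (b (n + 1) * (((n : ℝ) + 1) * z ^ (n + 1 - 1))) z := by
          refine h0.congr_deriv ?_
          push_cast
          rfl
        rwa [hbn] at h0'
      · intro n z hz
        have hz' := (hmem_abs z hz).le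
        rw [hudef]
        calc ‖a n * z ^ n‖ = |a n| * |z| ^ n := by
              rw [Real.norm_eq_abs, abs_mul, abs_pow]
          _ ≤ |a n| * (r' : ℝ) ^ n := by
              gcongr
      · exact Metric.mem_ball_self hr'pos
      · apply summable_zero.congr
        intro n
        simp
      · exact hy
    have hts := (hsum_a y (hmem_abs y hy)).tsum_eq
    rwa [hts] at key
  -- f (x₀ + ·) has the same derivative on the ball
  have hDf : ∀ y ∈ t, HasDerivAt (fun z => f (x₀ + z)) (g (x₀ + y)) y := by
    intro y hy
    have hd : dist (x₀ + y) x₀ < ε := by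
      rw [Real.dist_eq]
      simpa using lt_trans (hmem_abs y hy) hr'ε
    have h1 := (hfε hd).comp y ((hasDerivAt_id y).const_add x₀)
    simpa [Function.comp_def] using h1
  -- the difference is constant on the ball
  have hconst : ∀ y ∈ t, f (x₀ + y) - F y = f (x₀ + 0) - F 0 := by
    intro y hy
    have hdiff : ∀ z ∈ t, HasDerivAt (fun w => f (x₀ + w) - F w) 0 z := by
      intro z hz
      simpa [Pi.sub_def] using (hDf z hz).sub (hDF z hz)
    have h0mem : (0 : ℝ) ∈ t := Metric.mem_ball_self hr'pos
    exact (convex_ball (0 : ℝ) (r' : ℝ)).is_const_of_fderivWithin_eq_zero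
      (fun z hz => ((hdiff z hz).differentiableAt).differentiableWithinAt)
      (fun z hz => by
        rw [fderivWithin_of_isOpen htopen hz, ((hdiff z hz).hasFDerivAt).fderiv]
        ext w
        simp)
      hy h0mem
  have hF0 : F 0 = 0 := by
    have hz : ∀ n : ℕ, b (n + 1) * (0 : ℝ) ^ (n + 1) = 0 := by
      intro n; simp
    simp only [hF]
    rw [tsum_congr hz, tsum_zero]
  have hfeq : ∀ y ∈ t, f (x₀ + y) = f x₀ + F y := by
    intro y hy
    have h := hconst y hy
    rw [hF0, add_zero] at h
    linarith [h]
  -- summability of the primitive series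
  have hbs : ∀ y : ℝ, |y| ≤ (r' : ℝ) → Summable (fun n => |b n * y ^ n|) := by
    intro y hy
    rw [← summable_nat_add_iff 1]
    refine Summable.of_nonneg_of_le (fun n => abs_nonneg _) (fun n => ?_)
      (hu.mul_left (r' : ℝ))
    rw [hudef]
    have h1 : |b (n + 1)| ≤ |a n| := by
      simp only [hb, abs_div]
      rw [abs_of_nonneg (by positivity : (0:ℝ) ≤ (n : ℝ) + 1)]
      apply div_le_self (abs_nonneg _) (by linarith [Nat.cast_nonneg (α := ℝ) n])
    calc |b (n + 1) * y ^ (n + 1)| = |b (n + 1)| * (|y| ^ n * |y|) := by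
          rw [abs_mul, abs_pow, pow_succ]
      _ ≤ |a n| * ((r' : ℝ) ^ n * (r' : ℝ)) := by
          apply mul_le_mul h1 _ (by positivity) (abs_nonneg _)
          exact mul_le_mul (pow_le_pow_left₀ (abs_nonneg y) hy n) hy (abs_nonneg y)
            (by positivity)
      _ = (r' : ℝ) * (|a n| * (r' : ℝ) ^ n) := by ring
  -- assemble the power series for f
  refine ⟨FormalMultilinearSeries.ofScalars ℝ b, ⟨(r' : ℝ≥0∞), ?_, hr'0, ?_⟩⟩
  · apply FormalMultilinearSeries.le_radius_of_summable
    apply (hbs (r' : ℝ) (by simp)).congr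
    intro n
    rw [FormalMultilinearSeries.ofScalars_norm, Real.norm_eq_abs, abs_mul, abs_pow,
      abs_of_nonneg hr'pos.le]
  · intro y hy
    have hyt : y ∈ t := by
      rw [Metric.emetric_ball_nnreal] at hy
      exact hy
    have hyabs : |y| < (r' : ℝ) := hmem_abs y hyt
    have hsummable : Summable (fun n => b n * y ^ n) := (hbs y hyabs.le).of_abs
    have hts : ∑' n, b n * y ^ n = f (x₀ + y) := by
      rw [hsummable.tsum_eq_zero_add, hfeq y hyt]
      simp [hb, hF]
    have hhs := hsummable.hasSum
    rw [hts] at hhs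
    have heq : (fun n => FormalMultilinearSeries.ofScalars ℝ b n fun _ => y)
        = fun n => b n * y ^ n := by
      funext n
      rw [FormalMultilinearSeries.ofScalars_apply_eq, smul_eq_mul]
    rwa [heq]

lemma gFun_analyticAt {C : ℝ} (hC : 0 < C) {t : ℝ} (ht : -Real.log C < t) :
    AnalyticAt ℝ (gFun C) t := by
  apply ContDiffAt.analyticAt
  have h1 : ContDiffAt ℝ ⊤ (fun u : ℝ => (1 / 3 : ℝ) * Real.exp (-u / 3)) t :=
    (contDiff_const.mul (Real.contDiff_exp.comp ((contDiff_id (E := ℝ)).neg.div_const 3))).contDiffAt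
  have h2 : ContDiffAt ℝ ⊤ (fun u : ℝ => C - Real.exp (-u)) t :=
    (contDiff_const.sub (Real.contDiff_exp.comp (contDiff_id (E := ℝ)).neg)).contDiffAt
  have h3 : ContDiffAt ℝ ⊤ (fun u : ℝ => (C - Real.exp (-u)) ^ ((1 : ℝ) / 3)) t :=
    ((Real.contDiffAt_rpow_const_of_ne (p := (1 : ℝ) / 3) (upos hC ht).ne').comp t h2 :)
  exact h1.mul h3

/-- For `C > 0`, the function `ψ(t) = ∫_{e^{−t/3}}^{C^{1/3}} (C − r³)^{1/3} dr` is smooth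
on `(−log C, ∞)` with `ψ′(t) = (1/3)·e^{−t/3}·(C − e^{−t})^{1/3} > 0` there, and for
every `t > −log C` one has `ψ′(t) + 3ψ″(t) = (C·e^t − 1)⁻¹·ψ′(t)` and
`27·ψ′(t)²·(ψ′(t) + 3ψ″(t))·e^{2t} = 1`. -/
theorem stmt19 (C : ℝ) (hC : 0 < C) :
    ContDiffOn ℝ (⊤ : ℕ∞) (psiPot C) (Set.Ioi (-Real.log C))
    ∧ ∀ t : ℝ, -Real.log C < t →
        deriv (psiPot C) t
            = (1 / 3) * Real.exp (-t / 3) * (C - Real.exp (-t)) ^ ((1 : ℝ) / 3)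
        ∧ 0 < deriv (psiPot C) t
        ∧ deriv (psiPot C) t + 3 * deriv (deriv (psiPot C)) t
            = (C * Real.exp t - 1)⁻¹ * deriv (psiPot C) t
        ∧ 27 * deriv (psiPot C) t ^ 2
            * (deriv (psiPot C) t + 3 * deriv (deriv (psiPot C)) t)
            * Real.exp (2 * t) = 1 := by
  have hopen : IsOpen (Set.Ioi (-Real.log C)) := isOpen_Ioi
  constructor
  · have han : AnalyticOnNhd ℝ (psiPot C) (Set.Ioi (-Real.log C)) := by
      intro t ht
      apply analyticAt_of_hasDerivAt (gFun_analyticAt hC ht)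
      filter_upwards [Ioi_mem_nhds ht] with s hs
      exact psiPot_hasDerivAt hC hs
    exact han.contDiffOn hopen.uniqueDiffOn
  · intro t ht
    have hu := upos hC ht
    have hd1 := deriv_psiPot hC ht
    have hd2 : deriv (deriv (psiPot C)) t
        = (1 / 3) * (Real.exp (-t / 3) * (-1 / 3)) * (C - Real.exp (-t)) ^ ((1 : ℝ) / 3)
          + (1 / 3) * Real.exp (-t / 3)
            * ((1 / 3) * (C - Real.exp (-t)) ^ ((1 : ℝ) / 3 - 1) * Real.exp (-t)) := by
      rw [deriv2_psiPot hC ht]; exact (gFun_hasDerivAt hC ht).deriv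
    set u := C - Real.exp (-t) with hu_def
    have hkey : deriv (psiPot C) t + 3 * deriv (deriv (psiPot C)) t
        = (1 / 3) * Real.exp (-t / 3) * Real.exp (-t) * u ^ ((1 : ℝ) / 3 - 1) := by
      rw [hd1, hd2]; unfold gFun; ring
    have hd1' : deriv (psiPot C) t = (1 / 3) * Real.exp (-t / 3) * u ^ ((1 : ℝ) / 3) := hd1
    refine ⟨hd1, ?_, ?_, ?_⟩
    · rw [hd1']
      have h3 : (0:ℝ) < u ^ ((1 : ℝ) / 3) := Real.rpow_pos_of_pos hu _
      positivity
    · rw [hkey, hd1']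
      have hCe : C * Real.exp t - 1 = Real.exp t * u := by
        have h1 : Real.exp t * Real.exp (-t) = 1 := by
          rw [← Real.exp_add]; simp
        rw [hu_def]; nlinarith [h1]
      rw [hCe, Real.rpow_sub hu, Real.rpow_one, Real.exp_neg]
      rw [mul_inv]
      field_simp
    · rw [hkey, hd1']
      have h13 : u ^ ((1 : ℝ) / 3) * u ^ ((1 : ℝ) / 3) * u ^ ((1 : ℝ) / 3 - 1) = 1 := by
        rw [← Real.rpow_add hu, ← Real.rpow_add hu]
        norm_num
      have hE : Real.exp (-t / 3) * Real.exp (-t / 3) * (Real.exp (-t / 3) * Real.exp (-t))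
          * Real.exp (2 * t) = 1 := by
        rw [← Real.exp_add, ← Real.exp_add, ← Real.exp_add, ← Real.exp_add]
        ring_nf
        exact Real.exp_zero
      linear_combination (Real.exp (-t / 3) * Real.exp (-t / 3) * (Real.exp (-t / 3) * Real.exp (-t))
        * Real.exp (2 * t)) * h13 + hE
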